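/- Let R be a commutative ring and let f be an element of the algebra of generalized finite formal Laurent series R⟪X⟫ (functions ℝ → R with discrete bounded-below support, Cauchy product). If supp f ⊆ [0, ∞) and f(0) is a unit in R, then f has a multiplicative inverse in R⟪X⟫, and its inverse g satisfies supp g ⊆ [0, ∞) with g(0) = f(0)⁻¹. -/

import Mathlib

/-- A subset of ℝ is discrete iff it has no limit (accumulation) points in ℝ. -/
def DiscreteSubset (A : Set ℝ) : Prop := ∀ x : ℝ, ¬ AccPt x (Filter.principal A)

/-- Membership in the algebra R⟪X⟫: discrete support bounded from below. -/
def DBBSupp {R : Type*} [CommRing R] (f : ℝ → R) : Prop :=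
  DiscreteSubset (Function.support f) ∧ BddBelow (Function.support f)

/-- The Cauchy product (f·g)(m) = Σ_{p+q=m} f(p)g(q). -/
noncomputable def cauchy {R : Type*} [CommRing R] (f g : ℝ → R) : ℝ → R :=
  fun m => ∑ᶠ p : ℝ, f p * g (m - p)

open Classical in
/-- The identity X⁰ of R⟪X⟫: value 1 at 0 and 0 elsewhere. -/
noncomputable def oneX {R : Type*} [CommRing R] : ℝ → R :=
  fun m => if m = 0 then 1 else 0

/-!
The support of `f` is well ordered, so `f` is a Hahn series over `ℝ`, and the Cauchy product is
the Hahn series product. Its leading coefficient `f 0` is a unit, so `f` is invertible among Hahn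
series, and comparing leading terms in `f * g = 1` gives `supp g ⊆ [0, ∞)` and `f 0 * g 0 = 1`.
It remains to see that `supp g` is discrete. Reading `f * g = 1` at `x ≠ 0` shows that every
nonzero `x ∈ supp g` is `p + y` with `0 ≠ p ∈ supp f` and `y ∈ supp g`. The nonzero points of
`supp f` are at least some `δ > 0`, so the points of `supp g` below `b` are sums of at most `b / δ`
points of `supp f` below `b`, and there are finitely many of them.
-/

open Function Set HahnSeries

section LowerFinite

variable {A : Set ℝ}

theorem DiscreteSubset.finite_inter_Iic (hA : DiscreteSubset A) (hbdd : BddBelow A) (b : ℝ) :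
    (A ∩ Iic b).Finite := by
  obtain ⟨a, ha⟩ := hbdd
  by_contra hinf
  obtain ⟨x, -, hx⟩ := Set.Infinite.exists_accPt_of_subset_isCompact hinf (isCompact_Icc (a := a))
    fun y hy => ⟨ha hy.1, hy.2⟩
  exact hA x (hx.mono (Filter.principal_mono.2 inter_subset_left))

theorem discreteSubset_of_finite_inter_Iic (h : ∀ b, (A ∩ Iic b).Finite) : DiscreteSubset A :=
  fun x hx => Set.Infinite.of_accPt (AccPt.nhds_inter hx (Iic_mem_nhds (lt_add_one x)))
    ((h (x + 1)).subset fun _ hy => ⟨hy.2, hy.1⟩)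

theorem isPWO_of_finite_inter_Iic (h : ∀ b, (A ∩ Iic b).Finite) : A.IsPWO := by
  refine (Set.isWF_iff_no_descending_seq.2 fun u hu hmem => ?_).isPWO
  exact Set.infinite_range_of_injective hu.injective
    ((h (u 0)).subset (range_subset_iff.2 fun n => ⟨hmem n, hu.antitone n.zero_le⟩))

theorem exists_pos_forall_le_of_finite_inter_Iic (hpos : A ⊆ Ioi 0) (h : (A ∩ Iic 1).Finite) :
    ∃ δ > 0, ∀ p ∈ A, δ ≤ p := by
  obtain ⟨δ, hδ, hmin⟩ := Set.exists_min_image _ id (h.insert 1) (insert_nonempty _ _)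
  refine ⟨δ, ?_, fun p hp => ?_⟩
  · rcases hδ with rfl | hδ
    · exact one_pos
    · exact hpos hδ.1
  · rcases le_or_gt p 1 with hp1 | hp1
    · exact hmin p (Or.inr ⟨hp, hp1⟩)
    · exact (hmin 1 (Or.inl rfl)).trans hp1.le

theorem finite_inter_Iic_of_forall_exists_sub_mem {S T : Set ℝ} (hSpos : S ⊆ Ioi 0)
    (hS : ∀ b, (S ∩ Iic b).Finite) (hT0 : T ⊆ Ici 0) (hT : ∀ x ∈ T, x ≠ 0 → ∃ p ∈ S, x - p ∈ T)
    (b : ℝ) : (T ∩ Iic b).Finite := by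
  obtain ⟨δ, hδ, hδS⟩ := exists_pos_forall_le_of_finite_inter_Iic hSpos (hS 1)
  obtain ⟨n, hn⟩ := exists_nat_gt (b / δ)
  rw [div_lt_iff₀ hδ] at hn
  induction n generalizing b with
  | zero =>
    rw [Nat.cast_zero, zero_mul] at hn
    convert finite_empty
    exact eq_empty_of_forall_notMem fun x hx => (hx.2.trans_lt hn).not_ge (hT0 hx.1)
  | succ n ih =>
    have hrest := ih (b - δ) (by push_cast at hn; linarith)
    -- a nonzero `x ∈ T ∩ Iic b` is `p + (x - p)` with `p ∈ S ∩ Iic b` and `x - p ∈ T ∩ Iic (b - δ)`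
    refine (((hS b).biUnion fun p _ => hrest.image (p + ·)).insert 0).subset ?_
    rintro x ⟨hxT, hxb : x ≤ b⟩
    rcases eq_or_ne x 0 with rfl | hx0
    · exact Or.inl rfl
    obtain ⟨p, hpS, hxp⟩ := hT x hxT hx0
    have hδp := hδS p hpS
    have hpx : 0 ≤ x - p := hT0 hxp
    refine Or.inr (mem_biUnion ⟨hpS, mem_Iic.2 (by linarith)⟩ ⟨x - p, ⟨hxp, mem_Iic.2 ?_⟩, by ring⟩)
    linarith

end LowerFinite

namespace HahnSeries

theorem order_eq_zero_of_support_subset_Ici {Γ R : Type*} [Zero Γ] [LinearOrder Γ] [Zero R]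
    {x : HahnSeries Γ R} (hx : x.support ⊆ Ici 0) (h0 : x.coeff 0 ≠ 0) : x.order = 0 :=
  le_antisymm (order_le_of_coeff_ne_zero h0)
    (hx (coeff_order_eq_zero.not.2 (ne_zero_of_coeff_ne_zero h0)))

theorem order_eq_zero_of_mul_eq_one {Γ R : Type*} [AddCommMonoid Γ] [LinearOrder Γ]
    [IsOrderedCancelAddMonoid Γ] [Semiring R] [Nontrivial R] {x y : HahnSeries Γ R}
    (hxy : x * y = 1) (hx : x.order = 0) (hu : IsUnit x.leadingCoeff) : y.order = 0 := by
  have hy : y ≠ 0 := by rintro rfl; simp at hxy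
  have h := coeff_mul_order_add_order x y
  rw [hxy, hx, zero_add, coeff_one] at h
  by_contra hne
  rw [if_neg hne] at h
  exact leadingCoeff_ne_zero.2 hy (hu.mul_right_eq_zero.1 h.symm)

end HahnSeries

section Cauchy

variable {R : Type*} [CommRing R]

theorem cauchy_coeff_eq_coeff_mul (x y : HahnSeries ℝ R) :
    cauchy x.coeff y.coeff = (x * y).coeff := by
  ext m
  set A := Finset.antidiagonal x.isPWO_support y.isPWO_support m
  have hinj : Set.InjOn Prod.fst (A : Set (ℝ × ℝ)) := fun ij hij kl hkl h => by
    have hij' := (Finset.mem_antidiagonal.1 hij).2.2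
    have hkl' := (Finset.mem_antidiagonal.1 hkl).2.2
    ext <;> linarith
  calc cauchy x.coeff y.coeff m = ∑ p ∈ A.image Prod.fst, x.coeff p * y.coeff (m - p) := by
        refine finsum_eq_sum_of_support_subset _ fun p hp =>
          Finset.mem_image.2 ⟨(p, m - p), ?_, rfl⟩
        exact Finset.mem_antidiagonal.2 ⟨left_ne_zero_of_mul hp, right_ne_zero_of_mul hp, by ring⟩
    _ = ∑ ij ∈ A, x.coeff ij.1 * y.coeff (m - ij.1) := Finset.sum_image hinj
    _ = (x * y).coeff m := by
        rw [coeff_mul]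
        refine Finset.sum_congr rfl fun ij hij => ?_
        rw [← (Finset.mem_antidiagonal.1 hij).2.2, add_sub_cancel_left]

theorem coeff_one_eq_oneX : (1 : HahnSeries ℝ R).coeff = oneX := by
  ext m
  simp [coeff_one, oneX]

theorem exists_mem_sub_mem_support_of_cauchy_eq_oneX {f g : ℝ → R} (h : cauchy f g = oneX)
    (hf0 : IsUnit (f 0)) {x : ℝ} (hx : x ∈ support g) (hx0 : x ≠ 0) :
    ∃ p ∈ support f \ {0}, x - p ∈ support g := by
  by_contra! hnone
  have hsingle : cauchy f g x = f 0 * g x := by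
    rw [cauchy, finsum_eq_single _ 0 fun p hp => ?_, sub_zero]
    by_cases hfp : f p = 0
    · rw [hfp, zero_mul]
    · rw [notMem_support.1 (hnone p ⟨hfp, hp⟩), mul_zero]
  rw [h, oneX, if_neg hx0] at hsingle
  exact hx (hf0.mul_right_eq_zero.1 hsingle.symm)

end Cauchy

/-- an element of R⟪X⟫ supported in [0,∞) whose coefficient at 0 is a
unit has a multiplicative inverse in R⟪X⟫, supported in [0,∞), whose coefficient at 0
is the inverse of f(0). -/
theorem laurent_inverse_order_zero {R : Type*} [CommRing R] (f : ℝ → R)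
    (hf : DBBSupp f) (hsupp : Function.support f ⊆ Set.Ici (0 : ℝ))
    (hunit : IsUnit (f 0)) :
    ∃ g : ℝ → R, DBBSupp g ∧ Function.support g ⊆ Set.Ici (0 : ℝ) ∧
      cauchy f g = oneX ∧ cauchy g f = oneX ∧ f 0 * g 0 = 1 := by
  obtain _ | _ := subsingleton_or_nontrivial R
  · exact ⟨f, hf, hsupp, Subsingleton.elim _ _, Subsingleton.elim _ _, Subsingleton.elim _ _⟩
  have hfin := hf.1.finite_inter_Iic hf.2
  let F : HahnSeries ℝ R := ⟨f, isPWO_of_finite_inter_Iic hfin⟩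
  have hF0 : F.order = 0 := order_eq_zero_of_support_subset_Ici hsupp hunit.ne_zero
  have hFlc : F.leadingCoeff = f 0 := by rw [leadingCoeff_eq, hF0]
  have hFunit : IsUnit F :=
    isUnit_of_isUnit_leadingCoeff_AddUnitOrder (hFlc ▸ hunit) (AddGroup.isAddUnit _)
  set G : HahnSeries ℝ R := ↑hFunit.unit⁻¹
  have hFG : F * G = 1 := hFunit.mul_val_inv
  have hG0 : G.order = 0 := order_eq_zero_of_mul_eq_one hFG hF0 (hFlc ▸ hunit)
  have hGsupp : support G.coeff ⊆ Ici 0 := fun x hx => hG0 ▸ order_le_of_coeff_ne_zero hx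
  have hfg : cauchy f G.coeff = oneX := by
    rw [← coeff_one_eq_oneX, ← hFG]; exact cauchy_coeff_eq_coeff_mul F G
  have hgf : cauchy G.coeff f = oneX := by
    rw [← coeff_one_eq_oneX, ← hFunit.val_inv_mul]; exact cauchy_coeff_eq_coeff_mul G F
  refine ⟨G.coeff, ⟨discreteSubset_of_finite_inter_Iic ?_, 0, hGsupp⟩, hGsupp, hfg, hgf, ?_⟩
  · refine finite_inter_Iic_of_forall_exists_sub_mem (S := support f \ {0}) ?_ ?_ hGsupp
      fun x hx hx0 => exists_mem_sub_mem_support_of_cauchy_eq_oneX hfg hunit hx hx0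
    · exact fun p hp => lt_of_le_of_ne (hsupp hp.1) (Ne.symm hp.2)
    · exact fun b => (hfin b).subset (inter_subset_inter_left _ sdiff_subset)
  · simpa [hF0, hG0, hFG, hFlc, leadingCoeff_eq] using (coeff_mul_order_add_order F G).symm
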